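/- Let n ≥ 4 be even and let Δ_{S(n)} = π(Δ̂_{S(n)}) ⊂ V be as in the context (the root system of S'(n) coincides with that of S(n)). Then there exists no parabolic set of roots P of Δ_{S(n)} admitting a nilradical N⁺ such that for all α, β ∈ N⁺ one has both α̂ + β̂ ∉ Δ_{W(n)} and not (α̂ = −ε_i and β̂ = −ε_j for some i ≠ j), where α̂ denotes the unique element of Δ̂_{S(n)} with π(α̂) = α. In other words, S'(n) has no cominuscule parabolic sets of roots. -/

import Mathlib

open Pointwise

/-- A subset `Pt` of a symmetric set `Φ` (`Φ = -Φ`) is a parabolic set if it is proper,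
`Φ = Pt ∪ (-Pt)`, and `Pt` is closed under sums lying in `Φ`. -/
def IsParabolicIn {V : Type*} [AddCommGroup V] (Φ Pt : Set V) : Prop :=
  Pt ⊂ Φ ∧ Φ = Pt ∪ (-Pt) ∧ ∀ α ∈ Pt, ∀ β ∈ Pt, α + β ∈ Φ → α + β ∈ Pt

/-- A proper subset `P` of `Δ` is a parabolic set of roots if `P = Pt ∩ Δ` for some
parabolic set `Pt` of `Δ ∪ (-Δ)`. -/
def IsParabolicRoots {V : Type*} [AddCommGroup V] (Δ P : Set V) : Prop :=
  P ⊂ Δ ∧ ∃ Pt, IsParabolicIn (Δ ∪ -Δ) Pt ∧ P = Pt ∩ Δ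

/-- `P = L ⊔ N` is a Levi decomposition of the parabolic set of roots `P`, coming from
a parabolic set `Pt` of `Δ ∪ (-Δ)`. -/
def IsLeviDecomp {V : Type*} [AddCommGroup V] (Δ P L N : Set V) : Prop :=
  ∃ Pt, IsParabolicIn (Δ ∪ -Δ) Pt ∧ P = Pt ∩ Δ ∧
    L = Pt ∩ (-Pt) ∩ Δ ∧ N = (Pt \ (-Pt)) ∩ Δ

/-- A parabolic set of roots is cominuscule if it admits a nilradical `N` such that the
sum of any two elements of `N` is not a root. -/
def IsCominusculeRoots {V : Type*} [AddCommGroup V] (Δ P : Set V) : Prop :=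
  IsParabolicRoots Δ P ∧
    ∃ L N, IsLeviDecomp Δ P L N ∧ ∀ α ∈ N, ∀ β ∈ N, α + β ∉ Δ

namespace Wn

noncomputable def e {n : ℕ} (i : Fin n) : Fin n → ℝ := Pi.single i 1

/-- `ε_I = Σ_{i ∈ I} ε_i`. -/
noncomputable def εF {n : ℕ} (I : Finset (Fin n)) : Fin n → ℝ := ∑ i ∈ I, e i

/-- The root system of `W(n)`: the roots `ε_{I,j} = ε_I - ε_j` (`j ∉ I`) and `ε_I`
(`∅ ≠ I ⊊ {1,…,n}`). -/
noncomputable def Δroot (n : ℕ) : Set (Fin n → ℝ) :=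
  {v | ∃ (I : Finset (Fin n)) (j : Fin n), j ∉ I ∧ v = εF I - e j} ∪
  {v | ∃ I : Finset (Fin n), I.Nonempty ∧ I ≠ Finset.univ ∧ v = εF I}

/-- `I ⊆ [1,n₀]` (in 0-based indexing: all elements of `I` are `< n₀`). -/
def low {n : ℕ} (n₀ : ℕ) (I : Finset (Fin n)) : Prop := ∀ i ∈ I, (i : ℕ) < n₀

/-- The Levi component `L(n₀)`. -/
noncomputable def L (n n₀ : ℕ) : Set (Fin n → ℝ) :=
  {v | ∃ I : Finset (Fin n), I.Nonempty ∧ low n₀ I ∧ v = εF I} ∪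
  {v | ∃ (I : Finset (Fin n)) (j : Fin n), low n₀ I ∧ (j : ℕ) < n₀ ∧ j ∉ I ∧
      v = εF I - e j} ∪
  {v | ∃ (I : Finset (Fin n)) (i j : Fin n), low n₀ I ∧ i ≠ j ∧ n₀ ≤ (i : ℕ) ∧
      n₀ ≤ (j : ℕ) ∧ v = εF I + e i - e j}

/-- The nilradical `N⁺(n₀)`. -/
noncomputable def Np (n n₀ : ℕ) : Set (Fin n → ℝ) :=
  {v | ∃ (I : Finset (Fin n)) (j : Fin n), low n₀ I ∧ n₀ ≤ (j : ℕ) ∧ v = εF I - e j}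

/-- The opposite nilradical `N⁻(n₀)`. -/
noncomputable def Nm (n n₀ : ℕ) : Set (Fin n → ℝ) :=
  {v | ∃ I : Finset (Fin n), I.Nonempty ∧ I ≠ Finset.univ ∧ ¬ low n₀ I ∧ v = εF I} ∪
  {v | ∃ (I : Finset (Fin n)) (j : Fin n), ¬ low n₀ I ∧ (j : ℕ) < n₀ ∧ j ∉ I ∧
      v = εF I - e j} ∪
  {v | ∃ (I : Finset (Fin n)) (j : Fin n), n₀ ≤ (j : ℕ) ∧ j ∉ I ∧
      2 ≤ (I.filter (fun i : Fin n => n₀ ≤ (i : ℕ))).card ∧ v = εF I - e j}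

/-- `P(n₀) = L(n₀) ∪ N⁺(n₀)`. -/
noncomputable def P (n n₀ : ℕ) : Set (Fin n → ℝ) := L n n₀ ∪ Np n n₀

/-- `P⁻(n₀) = L(n₀) ∪ N⁻(n₀)`. -/
noncomputable def Pm (n n₀ : ℕ) : Set (Fin n → ℝ) := L n n₀ ∪ Nm n n₀

/-- The action of `σ ∈ Sₙ` on `ℝⁿ` permuting the `εᵢ`. -/
def act {n : ℕ} (σ : Equiv.Perm (Fin n)) : (Fin n → ℝ) → (Fin n → ℝ) :=
  fun v => v ∘ σ.symm

end Wn

namespace Sn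

/-- `σ₀ = ε₁ + ⋯ + ε_n`. -/
noncomputable def sig (n : ℕ) : Fin n → ℝ := ∑ i : Fin n, Wn.e i

/-- `V = ℝⁿ / ℝσ₀`. -/
abbrev V (n : ℕ) := (Fin n → ℝ) ⧸ (Submodule.span ℝ {sig n})

noncomputable def π (n : ℕ) : (Fin n → ℝ) →ₗ[ℝ] V n := (Submodule.span ℝ {sig n}).mkQ

/-- `Δ̂_{S(n)}`: the roots `ε_{I,j}` (`j ∉ I`) and `ε_I` with `1 ≤ |I| ≤ n - 2`. -/
noncomputable def Δhat (n : ℕ) : Set (Fin n → ℝ) :=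
  {v | ∃ (I : Finset (Fin n)) (j : Fin n), j ∉ I ∧ v = Wn.εF I - Wn.e j} ∪
  {v | ∃ I : Finset (Fin n), 1 ≤ I.card ∧ I.card ≤ n - 2 ∧ v = Wn.εF I}

/-- The root system of `S(n)`, `Δ_{S(n)} = π(Δ̂_{S(n)})`. -/
noncomputable def Δroot (n : ℕ) : Set (V n) := π n '' Δhat n

noncomputable def LS (n n₀ : ℕ) : Set (V n) := π n '' (Wn.L n n₀ ∩ Δhat n)

noncomputable def NSp (n n₀ : ℕ) : Set (V n) := π n '' (Wn.Np n n₀ ∩ Δhat n)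

noncomputable def NSm (n n₀ : ℕ) : Set (V n) := π n '' (Wn.Nm n n₀ ∩ Δhat n)

/-- `P_{S(n)}(n₀)`. -/
noncomputable def PS (n n₀ : ℕ) : Set (V n) := LS n n₀ ∪ NSp n n₀

/-- `P⁻_{S(n)}(n₀)`. -/
noncomputable def PSm (n n₀ : ℕ) : Set (V n) := LS n n₀ ∪ NSm n n₀

/-- The image of `P ⊆ Δ_{S(n)}` under the action of `σ ∈ Sₙ` descended to `V`. -/
noncomputable def act (n : ℕ) (σ : Equiv.Perm (Fin n)) (P : Set (V n)) : Set (V n) :=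
  π n '' (Wn.act σ '' (Δhat n ∩ π n ⁻¹' P))

/-- `P` is a cominuscule parabolic set of roots of `S(n)`: it is parabolic and admits a
nilradical `N⁺` such that for any two elements of `N⁺`, the sum of their lifts to
`Δ̂_{S(n)}` is not a root of `W(n)`. -/
def IsCominusculeS (n : ℕ) (P : Set (V n)) : Prop :=
  IsParabolicRoots (Δroot n) P ∧
    ∃ Pt, IsParabolicIn (Δroot n ∪ -Δroot n) Pt ∧ P = Pt ∩ Δroot n ∧
      ∀ a ∈ Δhat n, ∀ b ∈ Δhat n,
        π n a ∈ (Pt \ (-Pt)) ∩ Δroot n → π n b ∈ (Pt \ (-Pt)) ∩ Δroot n →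
        a + b ∉ Wn.Δroot n

end Sn

/-!
Let `N = Pt \ -Pt` be the nilradical. If some `π(εₓ)` were outside `Pt`, then `π(-εₓ)` would lie
in `N`; writing `π(-εₓ) = π(εₖ) + π(ε_{{x,k}ᶜ})`, one of the two summands lies in `N` as well, and
adding `-εₓ` to its lift gives the root `ε_{{k},x}` or `ε_{{x,k}ᶜ,x}` of `W(n)`. Hence all `π(εₓ)`,
and then all `π(ε_I)` with `∅ ≠ I ≠ {1,…,n}`, lie in `Pt`. These classes are closed under negation
(`-π(ε_I) = π(ε_{Iᶜ})`), so they lie in the Levi part `Pt ∩ -Pt`; every root of `S(n)` is one of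
them or a sum of two of them, so `Δ_{S(n)} ⊆ Pt ∩ -Pt` and `Pt` would be all of `Δ ∪ -Δ`.
-/

namespace IsParabolicIn

variable {V : Type*} [AddCommGroup V] {Φ Pt : Set V} {a b : V}

theorem mem_or_neg_mem (h : IsParabolicIn Φ Pt) (ha : a ∈ Φ) : a ∈ Pt ∨ -a ∈ Pt := by
  rw [h.2.1] at ha
  exact ha.imp id Set.mem_neg.mp

theorem neg_mem (h : IsParabolicIn Φ Pt) (ha : a ∈ Φ) : -a ∈ Φ := by
  rw [h.2.1] at ha ⊢
  rcases ha with ha | ha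
  · exact Or.inr (by rwa [Set.mem_neg, neg_neg])
  · exact Or.inl ha

theorem add_mem (h : IsParabolicIn Φ Pt) (ha : a ∈ Pt) (hb : b ∈ Pt) (hab : a + b ∈ Φ) :
    a + b ∈ Pt :=
  h.2.2 a ha b hb hab

theorem add_mem_nilradical (h : IsParabolicIn Φ Pt) (ha : a ∈ Pt \ -Pt) (hb : b ∈ Pt)
    (hab : a + b ∈ Φ) : a + b ∈ Pt \ -Pt := by
  refine ⟨h.add_mem ha.1 hb hab, fun hneg => ha.2 ?_⟩
  have key : -(a + b) + b = -a := by abel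
  have := h.add_mem (Set.mem_neg.mp hneg) hb (by rw [key]; exact h.neg_mem (h.1.subset ha.1))
  rwa [key] at this

theorem mem_nilradical_or_of_add (h : IsParabolicIn Φ Pt) (hab : a + b ∈ Pt \ -Pt)
    (ha : a ∈ Φ) (hb : b ∈ Φ) : a ∈ Pt \ -Pt ∨ b ∈ Pt \ -Pt := by
  by_cases hna : -a ∈ Pt
  · right
    have := h.add_mem_nilradical hab hna (by rwa [add_neg_cancel_comm])
    rwa [add_neg_cancel_comm] at this
  · left
    exact ⟨(h.mem_or_neg_mem ha).resolve_right hna, hna⟩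

theorem add_mem_levi (h : IsParabolicIn Φ Pt) (ha : a ∈ Pt ∩ -Pt) (hb : b ∈ Pt ∩ -Pt)
    (hab : a + b ∈ Φ) : a + b ∈ Pt ∩ -Pt := by
  refine ⟨h.add_mem ha.1 hb.1 hab, Set.mem_neg.mpr ?_⟩
  have hneg := h.neg_mem hab
  rw [neg_add] at hneg ⊢
  exact h.add_mem ha.2 hb.2 hneg

theorem not_subset_levi {Δ : Set V} (h : IsParabolicIn (Δ ∪ -Δ) Pt) : ¬ Δ ⊆ Pt ∩ -Pt := by
  intro hΔ
  refine h.1.not_subset (Set.union_subset (fun v hv => (hΔ hv).1) fun v hv => ?_)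
  simpa using (hΔ hv).2

end IsParabolicIn

namespace Sn

open Wn (e εF)

variable {n : ℕ}

theorem π_sig : π n (sig n) = 0 :=
  (Submodule.Quotient.mk_eq_zero _).mpr (Submodule.mem_span_singleton_self _)

theorem π_εF_compl (I : Finset (Fin n)) : π n (εF Iᶜ) = -π n (εF I) := by
  have h : εF I + εF Iᶜ = sig n := Finset.sum_add_sum_compl I e
  rw [eq_sub_of_add_eq' h, map_sub, π_sig, zero_sub]

theorem π_neg_e (j : Fin n) : π n (-e j) = π n (εF {j}ᶜ) := by
  rw [π_εF_compl, εF, Finset.sum_singleton, map_neg]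

theorem neg_e_mem_Δhat (j : Fin n) : -e j ∈ Δhat n :=
  Or.inl ⟨∅, j, Finset.notMem_empty j, by rw [εF, Finset.sum_empty, zero_sub]⟩

theorem εF_mem_Δhat {I : Finset (Fin n)} (hI : I.Nonempty) (hcard : I.card ≤ n - 2) :
    εF I ∈ Δhat n :=
  Or.inr ⟨I, hI.card_pos, hcard, rfl⟩

theorem π_εF_mem_Δroot {I : Finset (Fin n)} (hI : I.Nonempty) (hI' : I ≠ Finset.univ) :
    π n (εF I) ∈ Δroot n := by
  have hlt : I.card < n := by
    simpa using Finset.card_lt_card (Finset.ssubset_univ_iff.mpr hI')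
  rcases le_or_gt I.card (n - 2) with hcard | hcard
  · exact ⟨_, εF_mem_Δhat hI hcard, rfl⟩
  · obtain ⟨y, hy⟩ : ∃ y, Iᶜ = {y} := Finset.card_eq_one.mp (by
      rw [Finset.card_compl, Fintype.card_fin]; omega)
    refine ⟨-e y, neg_e_mem_Δhat y, ?_⟩
    rw [π_neg_e, ← hy, compl_compl]

theorem εF_sub_e_mem_Δroot {I : Finset (Fin n)} {j : Fin n} (hj : j ∉ I) :
    εF I - e j ∈ Wn.Δroot n :=
  Or.inl ⟨I, j, hj, rfl⟩

theorem Δroot_subset (hn : 2 ≤ n) {L : Set (V n)}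
    (hεF : ∀ I : Finset (Fin n), I.Nonempty → I ≠ Finset.univ → π n (εF I) ∈ L)
    (hadd : ∀ a ∈ L, ∀ b ∈ L, a + b ∈ Δroot n → a + b ∈ L) : Δroot n ⊆ L := by
  have hcompl (j : Fin n) : π n (εF {j}ᶜ) ∈ L := by
    have : Nontrivial (Fin n) := Fin.nontrivial_iff_two_le.mpr hn
    obtain ⟨k, hk⟩ := exists_ne j
    exact hεF _ ⟨k, by simpa using hk⟩ (by simp)
  rintro _ ⟨_, (⟨I, j, hj, rfl⟩ | ⟨I, hI, hcard, rfl⟩), rfl⟩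
  · rcases I.eq_empty_or_nonempty with rfl | hI
    · rw [εF, Finset.sum_empty, zero_sub, π_neg_e]
      exact hcompl j
    · have hroot : π n (εF I - e j) ∈ Δroot n := ⟨_, Or.inl ⟨I, j, hj, rfl⟩, rfl⟩
      rw [sub_eq_add_neg, map_add, π_neg_e] at hroot ⊢
      exact hadd _ (hεF I hI (ne_of_mem_of_not_mem' (Finset.mem_univ j) hj).symm) _
        (hcompl j) hroot
  · refine hεF I (Finset.card_pos.mp hI) fun h => ?_
    rw [h, Finset.card_univ, Fintype.card_fin] at hcard
    omega

theorem π_εF_mem_of_forall_π_e_mem {L : Set (V n)} (he : ∀ x, π n (e x) ∈ L)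
    (hadd : ∀ a ∈ L, ∀ b ∈ L, a + b ∈ Δroot n → a + b ∈ L) {I : Finset (Fin n)}
    (hI : I.Nonempty) (hI' : I ≠ Finset.univ) : π n (εF I) ∈ L := by
  induction hI using Finset.Nonempty.cons_induction with
  | singleton x => simpa [εF] using he x
  | cons x I hx hI ih =>
    have hsub : I ≠ Finset.univ := fun h => hx (h ▸ Finset.mem_univ x)
    have hsum : π n (εF (Finset.cons x I hx)) = π n (e x) + π n (εF I) := by
      rw [εF, Finset.sum_cons, map_add, εF]
    rw [hsum]
    exact hadd _ (he x) _ (ih hsub) (hsum ▸ π_εF_mem_Δroot (Finset.cons_nonempty hx) hI')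

theorem π_e_mem_of_isParabolicIn (hn : 3 ≤ n) {Pt : Set (V n)}
    (hPt : IsParabolicIn (Δroot n ∪ -Δroot n) Pt)
    (H : ∀ a ∈ Δhat n, ∀ b ∈ Δhat n, π n a ∈ (Pt \ -Pt) ∩ Δroot n →
      π n b ∈ (Pt \ -Pt) ∩ Δroot n → a + b ∉ Wn.Δroot n)
    (x : Fin n) : π n (e x) ∈ Pt := by
  by_contra hx
  have : Nontrivial (Fin n) := Fin.nontrivial_iff_two_le.mpr (by omega)
  obtain ⟨k, hk⟩ := exists_ne x
  have hxk : ({x, k} : Finset (Fin n))ᶜ.card = n - 2 := by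
    rw [Finset.card_compl, Finset.card_pair hk.symm, Fintype.card_fin]
  have hek : e k ∈ Δhat n := by
    simpa [εF] using εF_mem_Δhat (Finset.singleton_nonempty k) (by simp; omega)
  have hεxk : εF {x, k}ᶜ ∈ Δhat n :=
    εF_mem_Δhat (Finset.card_pos.mp (by omega)) hxk.le
  have hNx : π n (-e x) ∈ Pt \ -Pt := by
    rw [map_neg]
    refine ⟨(hPt.mem_or_neg_mem (Or.inl ?_)).resolve_left hx, by simpa using hx⟩
    simpa [εF] using π_εF_mem_Δroot (Finset.singleton_nonempty x) (by
      simpa [Finset.eq_univ_iff_forall] using ⟨k, hk⟩)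
  have hsplit : π n (-e x) = π n (e k) + π n (εF {x, k}ᶜ) := by
    rw [π_εF_compl, εF, Finset.sum_pair hk.symm, map_neg, map_add]
    abel
  rw [hsplit] at hNx
  rcases hPt.mem_nilradical_or_of_add hNx (Or.inl ⟨_, hek, rfl⟩) (Or.inl ⟨_, hεxk, rfl⟩)
    with hN | hN
  · refine H _ (neg_e_mem_Δhat x) _ hek ⟨hsplit ▸ hNx, _, neg_e_mem_Δhat x, rfl⟩
      ⟨hN, _, hek, rfl⟩ ?_
    simpa [εF, neg_add_eq_sub] using εF_sub_e_mem_Δroot (I := {k}) (by simpa using hk.symm)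
  · refine H _ (neg_e_mem_Δhat x) _ hεxk ⟨hsplit ▸ hNx, _, neg_e_mem_Δhat x, rfl⟩
      ⟨hN, _, hεxk, rfl⟩ ?_
    rw [neg_add_eq_sub]
    exact εF_sub_e_mem_Δroot (by simp)

end Sn

theorem stmt_17 (n : ℕ) (hn : 4 ≤ n) :
    ¬ ∃ (P Pt : Set (Sn.V n)),
        P ⊂ Sn.Δroot n ∧
        IsParabolicIn (Sn.Δroot n ∪ -Sn.Δroot n) Pt ∧ P = Pt ∩ Sn.Δroot n ∧
        ∀ a ∈ Sn.Δhat n, ∀ b ∈ Sn.Δhat n,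
          Sn.π n a ∈ (Pt \ (-Pt)) ∩ Sn.Δroot n → Sn.π n b ∈ (Pt \ (-Pt)) ∩ Sn.Δroot n →
          a + b ∉ Wn.Δroot n ∧
            ¬ ∃ i j : Fin n, i ≠ j ∧ a = -Wn.e i ∧ b = -Wn.e j := by
  rintro ⟨-, Pt, -, hPt, -, H⟩
  have he : ∀ x, Sn.π n (Wn.e x) ∈ Pt :=
    Sn.π_e_mem_of_isParabolicIn (by omega) hPt fun a ha b hb hNa hNb => (H a ha b hb hNa hNb).1
  have hPt_add : ∀ a ∈ Pt, ∀ b ∈ Pt, a + b ∈ Sn.Δroot n → a + b ∈ Pt :=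
    fun a ha b hb hab => hPt.add_mem ha hb (Or.inl hab)
  have hεF : ∀ I : Finset (Fin n), I.Nonempty → I ≠ Finset.univ → Sn.π n (Wn.εF I) ∈ Pt :=
    fun I hI hI' => Sn.π_εF_mem_of_forall_π_e_mem he hPt_add hI hI'
  refine hPt.not_subset_levi (Sn.Δroot_subset (by omega) (fun I hI hI' => ⟨hεF I hI hI', ?_⟩)
    fun a ha b hb hab => hPt.add_mem_levi ha hb (Or.inl hab))
  rw [Set.mem_neg, ← Sn.π_εF_compl]
  exact hεF Iᶜ (by simpa [Finset.nonempty_iff_ne_empty] using hI') (by simpa using hI.ne_empty)
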